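/- For every graph G, γ_g'(G) ≤ γ_g(G) + 1. -/

import Mathlib

/-!
After Staller's first move `v` the game continues as the Dominator-start game on the partially
dominated graph `(G, N[v])`. Its value is at most that of the Dominator-start game on `G` itself,
because enlarging the dominated set never lengthens the game: Dominator replaces a planned move
that has become illegal by an arbitrary legal one, and every legal move of Staller was legal
before. The game values are computed with a fuel parameter, which only grows the value.
-/

open Finset

namespace DomGame

variable {V : Type*} [Fintype V] [DecidableEq V]

/-- Closed neighborhood of `v` in `G`, as a `Finset`. -/
noncomputable def cn (G : SimpleGraph V) (v : V) : Finset V :=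
  haveI : DecidablePred (fun u : V => u = v ∨ G.Adj v u) := fun _ => Classical.propDecidable _
  Finset.univ.filter (fun u : V => u = v ∨ G.Adj v u)

/-- Value (number of remaining moves, optimal play) of the domination game on `G`,
with fuel, where `D` is the set of already dominated vertices and `who = true`
means Dominator is to move (minimizing); `who = false` means Staller (maximizing). -/
noncomputable def auxVal (G : SimpleGraph V) : ℕ → Bool → Finset V → ℕ
  | 0, _, _ => 0
  | n + 1, who, D =>
    if D = Finset.univ then 0
    else
      haveI : DecidablePred (fun v : V => ¬ cn G v ⊆ D) := fun _ => Classical.propDecidable _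
      let moves : Finset V := Finset.univ.filter (fun v : V => ¬ cn G v ⊆ D)
      if who then
        WithTop.untopD 0 ((moves.image (fun v => 1 + auxVal G n false (D ∪ cn G v))).min)
      else
        moves.sup (fun v => 1 + auxVal G n true (D ∪ cn G v))

/-- Remaining moves of the domination game on the partially dominated graph `(G, D)`,
Dominator to move, both players optimal. -/
noncomputable def gVal (G : SimpleGraph V) (D : Finset V) : ℕ :=
  auxVal G (Fintype.card V) true D

/-- Remaining moves, Staller to move. -/
noncomputable def gVal' (G : SimpleGraph V) (D : Finset V) : ℕ :=
  auxVal G (Fintype.card V) false D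

/-- The game domination number (Dominator starts). -/
noncomputable def gammaG (G : SimpleGraph V) : ℕ := gVal G ∅

/-- The Staller-start game domination number. -/
noncomputable def gammaG' (G : SimpleGraph V) : ℕ := gVal' G ∅

/-- `S` is a dominating set of `G`. -/
def IsDomSet (G : SimpleGraph V) (S : Finset V) : Prop :=
  ∀ v : V, ∃ u ∈ S, u = v ∨ G.Adj u v

/-- The domination number of `G`. -/
noncomputable def gamma (G : SimpleGraph V) : ℕ :=
  sInf {n | ∃ S : Finset V, IsDomSet G S ∧ S.card = n}

end DomGame

namespace DomGame

variable {V : Type*} [Fintype V] {G : SimpleGraph V} {D D' : Finset V} {n c : ℕ} {v : V}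

noncomputable def legalMoves (G : SimpleGraph V) (D : Finset V) : Finset V :=
  haveI : DecidablePred (fun v : V => ¬ cn G v ⊆ D) := fun _ => Classical.propDecidable _
  Finset.univ.filter (fun v : V => ¬ cn G v ⊆ D)

theorem mem_legalMoves : v ∈ legalMoves G D ↔ ¬ cn G v ⊆ D := by
  classical
  simp [legalMoves]

theorem mem_cn_self (G : SimpleGraph V) (v : V) : v ∈ cn G v := by
  classical
  simp [cn]

theorem legalMoves_nonempty (hD : D ≠ univ) : (legalMoves G D).Nonempty := by
  obtain ⟨v, hv⟩ := not_forall.1 (mt eq_univ_iff_forall.2 hD)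
  exact ⟨v, mem_legalMoves.2 fun h => hv (h (mem_cn_self G v))⟩

theorem ne_univ_of_mem_legalMoves (hv : v ∈ legalMoves G D) : D ≠ univ := by
  rintro rfl
  exact mem_legalMoves.1 hv (subset_univ _)

theorem legalMoves_anti (h : D ⊆ D') : legalMoves G D' ⊆ legalMoves G D :=
  fun _ hv => mem_legalMoves.2 fun hs => mem_legalMoves.1 hv (hs.trans h)

variable [DecidableEq V]

@[simp]
theorem auxVal_zero (who : Bool) (D : Finset V) : auxVal G 0 who D = 0 := by
  rw [auxVal]

@[simp]
theorem auxVal_succ_univ (who : Bool) : auxVal G (n + 1) who univ = 0 := by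
  rw [auxVal, if_pos rfl]

theorem auxVal_succ_true (hD : D ≠ univ) :
    auxVal G (n + 1) true D =
      WithTop.untopD 0 (((legalMoves G D).image fun v => 1 + auxVal G n false (D ∪ cn G v)).min) := by
  rw [auxVal, if_neg hD]
  rfl

theorem auxVal_succ_false (hD : D ≠ univ) :
    auxVal G (n + 1) false D = (legalMoves G D).sup fun v => 1 + auxVal G n true (D ∪ cn G v) := by
  rw [auxVal, if_neg hD]
  rfl

theorem auxVal_succ_true_le (hv : v ∈ legalMoves G D) :
    auxVal G (n + 1) true D ≤ auxVal G n false (D ∪ cn G v) + 1 := by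
  have hD := ne_univ_of_mem_legalMoves hv
  obtain ⟨m, hm⟩ := min_of_nonempty ((legalMoves_nonempty (G := G) hD).image
    fun v => 1 + auxVal G n false (D ∪ cn G v))
  have hle := hm ▸ min_le (mem_image_of_mem (fun v => 1 + auxVal G n false (D ∪ cn G v)) hv)
  rw [auxVal_succ_true hD, hm, WithTop.untopD_coe, add_comm]
  exact WithTop.coe_le_coe.1 hle

theorem le_auxVal_succ_true (hD : D ≠ univ)
    (h : ∀ v ∈ legalMoves G D, c ≤ auxVal G n false (D ∪ cn G v) + 1) :
    c ≤ auxVal G (n + 1) true D := by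
  obtain ⟨m, hm⟩ := min_of_nonempty ((legalMoves_nonempty (G := G) hD).image
    fun v => 1 + auxVal G n false (D ∪ cn G v))
  obtain ⟨v, hv, rfl⟩ := mem_image.1 (mem_of_min hm)
  rw [auxVal_succ_true hD, hm, WithTop.untopD_coe, add_comm]
  exact h v hv

theorem le_auxVal_succ_false (hv : v ∈ legalMoves G D) :
    auxVal G n true (D ∪ cn G v) + 1 ≤ auxVal G (n + 1) false D := by
  have hD := ne_univ_of_mem_legalMoves hv
  rw [auxVal_succ_false hD, add_comm]
  exact le_sup (f := fun v => 1 + auxVal G n true (D ∪ cn G v)) hv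

theorem auxVal_succ_false_le (h : ∀ v ∈ legalMoves G D, auxVal G n true (D ∪ cn G v) + 1 ≤ c) :
    auxVal G (n + 1) false D ≤ c := by
  by_cases hD : D = univ
  · simp [hD]
  rw [auxVal_succ_false hD]
  exact Finset.sup_le fun v hv => add_comm 1 (auxVal G n true _) ▸ h v hv

theorem auxVal_le_auxVal_succ (n : ℕ) (who : Bool) (D : Finset V) :
    auxVal G n who D ≤ auxVal G (n + 1) who D := by
  induction n generalizing who D with
  | zero => simp
  | succ n ih =>
    cases who with
    | false =>
      exact auxVal_succ_false_le fun v hv =>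
        (Nat.add_le_add_right (ih true _) 1).trans (le_auxVal_succ_false hv)
    | true =>
      by_cases hD : D = univ
      · simp [hD]
      exact le_auxVal_succ_true hD fun v hv =>
        (auxVal_succ_true_le hv).trans (Nat.add_le_add_right (ih false _) 1)

theorem auxVal_le_auxVal_of_subset (n : ℕ) (who : Bool) (h : D ⊆ D') :
    auxVal G n who D' ≤ auxVal G n who D := by
  induction n generalizing who D D' with
  | zero => simp
  | succ n ih =>
    cases who with
    | false =>
      exact auxVal_succ_false_le fun v hv =>
        (Nat.add_le_add_right (ih true (union_subset_union h subset_rfl)) 1).trans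
          (le_auxVal_succ_false (legalMoves_anti h hv))
    | true =>
      by_cases hD' : D' = univ
      · simp [hD']
      have hD : D ≠ univ := fun hD => hD' (univ_subset_iff.1 (hD ▸ h))
      refine le_auxVal_succ_true hD fun v hv => ?_
      by_cases hv' : v ∈ legalMoves G D'
      · exact (auxVal_succ_true_le hv').trans
          (Nat.add_le_add_right (ih false (union_subset_union h subset_rfl)) 1)
      -- `v` is no longer legal, so Dominator plays an arbitrary legal `u` instead
      obtain ⟨u, hu⟩ := legalMoves_nonempty (G := G) hD'
      have hcv : cn G v ⊆ D' := not_not.1 (hv' ∘ mem_legalMoves.2)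
      have hcover : D ∪ cn G v ⊆ D' ∪ cn G u :=
        union_subset (h.trans subset_union_left) (hcv.trans subset_union_left)
      exact (auxVal_succ_true_le hu).trans (Nat.add_le_add_right (ih false hcover) 1)

theorem auxVal_false_le_auxVal_true_add_one (n : ℕ) (D : Finset V) :
    auxVal G n false D ≤ auxVal G n true D + 1 := by
  cases n with
  | zero => simp
  | succ n =>
    exact auxVal_succ_false_le fun v _ => Nat.add_le_add_right
      ((auxVal_le_auxVal_succ n true _).trans
        (auxVal_le_auxVal_of_subset _ true subset_union_left)) 1

end DomGame

/-- γ_g'(G) ≤ γ_g(G) + 1. -/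
theorem stmt19 {V : Type*} [Fintype V] [DecidableEq V] (G : SimpleGraph V) :
    DomGame.gammaG' G ≤ DomGame.gammaG G + 1 :=
  DomGame.auxVal_false_le_auxVal_true_add_one _ _
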